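/- Fix q ≥ 2. Under the dictatorship-test distribution with a parity h having K active coordinates and letting ψ* = q·c₀ + K (mod 2), the random vector (h(x^{(1)}), …, h(x^{(q)})) ∈ F₂^q is ε-close in the sense of characters to the uniform distribution D̄ on {z ∈ F₂^q : ⊕_j z_j = ψ*}: for every S ⊊ [q] nonempty, |E[(−1)^{⊕_{j∈S} Z_j}]| ≤ exp(−2K/q), while E_{D̄}[(−1)^{⊕_{j∈S} z_j}] = 0, and both distributions give the character of the full set [q] the same value (−1)^{ψ*}. -/

import Mathlib

/-! The coordinates of `σ` are independent, so the character of `Z` at `S` factors into a product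
over `i ∈ [M]` of `E_t (-1)^(c_i [t ∈ S])`, which is `1` if `c_i = 0` and `1 - 2|S|/q` if
`c_i = 1`; for `0 < |S| < q` the latter has absolute value at most `1 - 2/q ≤ exp(-2/q)`.
For `S = [q]` the parity `⊕_j Z_j = q c₀ + K` is deterministic. On the hyperplane
`⊕_j z_j = ψ*`, adding `e_{j₀} + e_{j₁}` with `j₀ ∈ S`, `j₁ ∉ S` is an involution that changes
the sign of the character at `S`. -/

open Finset

theorem AddChar.map_sum_eq_prod {A M ι : Type*} [AddCommMonoid A] [CommMonoid M]
    (ψ : AddChar A M) (s : Finset ι) (f : ι → A) : ψ (∑ i ∈ s, f i) = ∏ i ∈ s, ψ (f i) := by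
  induction s using Finset.cons_induction with
  | empty => simp
  | cons a s ha ih => rw [sum_cons, prod_cons, AddChar.map_add_eq_mul, ih]

noncomputable def signChar : AddChar (ZMod 2) ℝ where
  toFun a := if a = 0 then 1 else -1
  map_zero_eq_one' := if_pos rfl
  map_add_eq_mul' a b := by
    have h : ∀ x : ZMod 2, x = 0 ∨ x = 1 := by decide
    rcases h a with rfl | rfl <;> rcases h b with rfl | rfl <;>
      simp [show (1 : ZMod 2) + 1 = 0 from rfl]

theorem signChar_apply (a : ZMod 2) : signChar a = if a = 0 then 1 else -1 := rfl

@[simp] theorem signChar_one : signChar 1 = -1 := by simp [signChar_apply]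

theorem abs_signChar (a : ZMod 2) : |signChar a| = 1 := by
  rw [signChar_apply]; split_ifs <;> simp

theorem signChar_add_one (a : ZMod 2) : signChar (a + 1) = -signChar a := by
  rw [AddChar.map_add_eq_mul, signChar_one, mul_neg_one]

theorem signChar_natCast (n : ℕ) : signChar n = (-1) ^ n := by
  rw [← nsmul_one, AddChar.map_nsmul_eq_pow, signChar_one]

theorem card_filter_sum_eq {G : Type*} [AddCommGroup G] [Fintype G] [DecidableEq G] (n : ℕ)
    (ψ : G) : #{z : Fin (n + 1) → G | ∑ j, z j = ψ} = Fintype.card G ^ n := by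
  rw [← Fintype.card_fin n, ← Fintype.card_fun, Fintype.card_fin, ← card_univ]
  refine card_nbij' Fin.tail (fun t => Fin.cons (ψ - ∑ j, t j) t) (fun _ _ => mem_univ _)
    (fun t _ => by simp [Fin.sum_cons]) (fun z hz => ?_) (fun t _ => Fin.tail_cons _ _)
  have hz : z 0 + ∑ j, z (Fin.succ j) = ψ := by simpa [Fin.sum_univ_succ] using hz
  simp only [Fin.tail, ← hz, add_sub_cancel_right]
  exact Fin.cons_self_tail z

theorem sum_signChar_sum_eq_zero {κ : Type*} [Fintype κ] [DecidableEq κ] (ψ : ZMod 2)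
    {S : Finset κ} {j₀ j₁ : κ} (h₀ : j₀ ∈ S) (h₁ : j₁ ∉ S) :
    ∑ z ∈ {z : κ → ZMod 2 | ∑ j, z j = ψ}, signChar (∑ j ∈ S, z j) = 0 := by
  have hne : j₀ ≠ j₁ := ne_of_mem_of_not_mem h₀ h₁
  set d : κ → ZMod 2 := Pi.single j₀ 1 + Pi.single j₁ 1
  have sum_d_S : ∑ j ∈ S, d j = 1 := by simp [d, sum_add_distrib, h₀, h₁]
  have sum_d_univ : ∑ j, d j = 0 := by simp [d, sum_add_distrib, ZModModule.add_self]
  refine sum_involution (fun z _ => z + d)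
    (fun z _ => by
      simp only [Pi.add_apply, sum_add_distrib, sum_d_S, signChar_add_one, add_neg_cancel])
    (fun z _ _ hz => by simpa [d, hne] using congrFun hz j₀)
    (fun z hz => by simpa [sum_add_distrib, sum_d_univ] using hz)
    (fun z _ => by rw [add_assoc, ZModModule.add_self, add_zero])

section Dictatorship

variable {ι κ : Type*}

def dictPoint [DecidableEq κ] (σ : ι → κ) (j : κ) : ι → ZMod 2 :=
  fun i => if σ i = j then 1 else 0

def affineParity [Fintype ι] (c₀ : ZMod 2) (c y : ι → ZMod 2) : ZMod 2 := c₀ + ∑ i, c i * y i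

theorem sum_affineParity_dictPoint [Fintype ι] [DecidableEq κ] (c₀ : ZMod 2) (c : ι → ZMod 2)
    (S : Finset κ) (σ : ι → κ) :
    ∑ j ∈ S, affineParity c₀ c (dictPoint σ j) = #S • c₀ + ∑ i, if σ i ∈ S then c i else 0 := by
  simp only [affineParity, dictPoint, sum_add_distrib, sum_const, mul_ite, mul_one, mul_zero]
  rw [sum_comm]
  simp [sum_ite_eq]

theorem sum_signChar_dictPoint [Fintype ι] [DecidableEq ι] [Fintype κ] [DecidableEq κ]
    (c₀ : ZMod 2) (c : ι → ZMod 2) (S : Finset κ) :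
    ∑ σ : ι → κ, signChar (∑ j ∈ S, affineParity c₀ c (dictPoint σ j)) =
      signChar (#S • c₀) * ∏ i, ∑ t, signChar (if t ∈ S then c i else 0) := by
  simp_rw [sum_affineParity_dictPoint, AddChar.map_add_eq_mul, AddChar.map_sum_eq_prod,
    ← mul_sum, Fintype.prod_sum]

theorem sum_signChar_ite_mem_div [Fintype κ] [DecidableEq κ] [Nonempty κ] (S : Finset κ)
    (a : ZMod 2) :
    (∑ t, signChar (if t ∈ S then a else 0)) / Fintype.card κ =
      if a = 1 then 1 - 2 * (#S : ℝ) / Fintype.card κ else 1 := by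
  have hκ : (Fintype.card κ : ℝ) ≠ 0 := by positivity
  have h : ∀ x : ZMod 2, x = 0 ∨ x = 1 := by decide
  rcases h a with rfl | rfl
  · simp [hκ]
  · have hSc : (#{t | t ∉ S} : ℝ) = Fintype.card κ - #S := by
      rw [filter_notMem_eq_sdiff, card_univ_sdiff, Nat.cast_sub (card_le_univ S)]
    rw [if_pos rfl]
    simp only [apply_ite signChar, signChar_one, AddChar.map_zero_eq_one, sum_ite, subset_univ,
      filter_mem_eq_of_subset, sum_neg_distrib, sum_const, nsmul_eq_mul, mul_one, hSc]
    field_simp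
    ring

theorem expect_signChar_dictPoint [Fintype ι] [DecidableEq ι] [Fintype κ] [DecidableEq κ]
    [Nonempty κ] (c₀ : ZMod 2) (c : ι → ZMod 2) (S : Finset κ) :
    (∑ σ : ι → κ, signChar (∑ j ∈ S, affineParity c₀ c (dictPoint σ j))) /
        (Fintype.card κ : ℝ) ^ Fintype.card ι =
      signChar (#S • c₀) * (1 - 2 * (#S : ℝ) / Fintype.card κ) ^ #{i | c i = 1} := by
  rw [sum_signChar_dictPoint, mul_div_assoc, ← card_univ (α := ι), ← prod_const,
    ← prod_div_distrib]
  simp_rw [sum_signChar_ite_mem_div]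
  simp [prod_ite]

end Dictatorship

theorem abs_one_sub_two_mul_div_le_exp {s q : ℕ} (hs : 1 ≤ s) (hsq : s < q) :
    |1 - 2 * (s : ℝ) / q| ≤ Real.exp (-2 / q) := by
  have hq : (0 : ℝ) < q := Nat.cast_pos.2 (by omega)
  have hs' : (1 : ℝ) ≤ s := by exact_mod_cast hs
  have hsq' : (s : ℝ) + 1 ≤ q := by exact_mod_cast hsq
  calc |1 - 2 * (s : ℝ) / q| = |((q : ℝ) - 2 * s) / q| := by rw [sub_div, div_self hq.ne']
    _ = |(q : ℝ) - 2 * s| / q := by rw [abs_div, abs_of_pos hq]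
    _ ≤ (q - 2) / q := by
        gcongr
        rw [abs_le]
        constructor <;> linarith
    _ = -2 / q + 1 := by field_simp; ring
    _ ≤ Real.exp (-2 / q) := Real.add_one_le_exp _

theorem stmt16_general (M q : ℕ) (hq : 2 ≤ q)
    (c₀ : ZMod 2) (c : Fin M → ZMod 2) (K : ℕ)
    (hK : K = ((univ : Finset (Fin M)).filter (fun i => c i = 1)).card)
    (x : (Fin M → Fin q) → Fin q → Fin M → ZMod 2)
    (hx : ∀ σ j i, x σ j i = if σ i = j then 1 else 0)
    (h : (Fin M → ZMod 2) → ZMod 2)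
    (hh : ∀ y, h y = c₀ + ∑ i, c i * y i)
    (ψ : ZMod 2) (hψ : ψ = (q : ZMod 2) * c₀ + (K : ZMod 2))
    (sgn : ZMod 2 → ℝ) (hsgn : ∀ a, sgn a = if a = 0 then 1 else -1) :
    (∀ S : Finset (Fin q), S.Nonempty → S ⊂ univ →
      |(∑ σ : Fin M → Fin q, sgn (∑ j ∈ S, h (x σ j))) / (q : ℝ) ^ M|
          ≤ Real.exp (-(2 * K) / q) ∧
      (∑ z ∈ (univ : Finset (Fin q → ZMod 2)).filter (fun z => ∑ j, z j = ψ),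
          sgn (∑ j ∈ S, z j)) / (2 : ℝ) ^ (q - 1) = 0) ∧
    (∑ σ : Fin M → Fin q, sgn (∑ j, h (x σ j))) / (q : ℝ) ^ M = sgn ψ ∧
    (∑ z ∈ (univ : Finset (Fin q → ZMod 2)).filter (fun z => ∑ j, z j = ψ),
        sgn (∑ j, z j)) / (2 : ℝ) ^ (q - 1) = sgn ψ := by
  obtain rfl : sgn = signChar := funext hsgn
  obtain rfl : x = dictPoint := funext₃ hx
  obtain rfl : h = affineParity c₀ c := funext hh
  subst hK hψ
  obtain ⟨n, rfl⟩ : ∃ n, q = n + 1 := ⟨q - 1, by omega⟩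
  have expect (S : Finset (Fin (n + 1))) := expect_signChar_dictPoint (ι := Fin M) c₀ c S
  simp only [Fintype.card_fin] at expect
  refine ⟨fun S hS hSu => ⟨?_, ?_⟩, ?_, ?_⟩
  · have hSq : #S < n + 1 := by simpa using card_lt_card hSu
    rw [expect, abs_mul, abs_signChar, one_mul, abs_pow]
    calc _ ≤ Real.exp (-2 / (n + 1 : ℕ)) ^ _ :=
          pow_le_pow_left₀ (abs_nonneg _) (abs_one_sub_two_mul_div_le_exp hS.card_pos hSq) _
      _ = _ := by rw [← Real.exp_nat_mul]; ring_nf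
  · obtain ⟨j₀, hj₀⟩ := hS
    obtain ⟨j₁, -, hj₁⟩ := exists_of_ssubset hSu
    rw [sum_signChar_sum_eq_zero _ hj₀ hj₁, zero_div]
  · rw [expect, card_univ, Fintype.card_fin, mul_div_assoc, div_self (by positivity), mul_one,
      show (1 : ℝ) - 2 = -1 by norm_num, AddChar.map_add_eq_mul, signChar_natCast, nsmul_eq_mul]
  · rw [sum_congr rfl fun z hz => congrArg signChar (mem_filter.1 hz).2, sum_const,
      card_filter_sum_eq, nsmul_eq_mul]
    simp

/-- Fix `q ≥ 2`. Under the dictatorship-test distribution (uniform over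
`σ : [M] → [q]`), with a parity `h` having `K` active coordinates and
`ψ* = q·c₀ + K (mod 2)`, the vector `(Z_1, …, Z_q) = (h(x^{(1)}), …, h(x^{(q)}))` is close
in the sense of characters to the uniform distribution `D̄` on
`{z ∈ F₂^q : ⊕_j z_j = ψ*}`: for every nonempty `S ⊊ [q]`,
`|E[(−1)^{⊕_{j∈S} Z_j}]| ≤ exp(−2K/q)` while `E_{D̄}[(−1)^{⊕_{j∈S} z_j}] = 0`, and both
distributions give the character of the full set `[q]` the value `(−1)^{ψ*}`. -/
theorem stmt16 (M q : ℕ) (hM : 1 ≤ M) (hq : 2 ≤ q)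
    (c₀ : ZMod 2) (c : Fin M → ZMod 2) (K : ℕ)
    (hK : K = ((univ : Finset (Fin M)).filter (fun i => c i = 1)).card)
    (x : (Fin M → Fin q) → Fin q → Fin M → ZMod 2)
    (hx : ∀ σ j i, x σ j i = if σ i = j then 1 else 0)
    (h : (Fin M → ZMod 2) → ZMod 2)
    (hh : ∀ y, h y = c₀ + ∑ i, c i * y i)
    (ψ : ZMod 2) (hψ : ψ = (q : ZMod 2) * c₀ + (K : ZMod 2))
    (sgn : ZMod 2 → ℝ) (hsgn : ∀ a, sgn a = if a = 0 then 1 else -1) :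
    (∀ S : Finset (Fin q), S.Nonempty → S ⊂ univ →
      |(∑ σ : Fin M → Fin q, sgn (∑ j ∈ S, h (x σ j))) / (q : ℝ) ^ M|
          ≤ Real.exp (-(2 * K) / q) ∧
      (∑ z ∈ (univ : Finset (Fin q → ZMod 2)).filter (fun z => ∑ j, z j = ψ),
          sgn (∑ j ∈ S, z j)) / (2 : ℝ) ^ (q - 1) = 0) ∧
    (∑ σ : Fin M → Fin q, sgn (∑ j, h (x σ j))) / (q : ℝ) ^ M = sgn ψ ∧
    (∑ z ∈ (univ : Finset (Fin q → ZMod 2)).filter (fun z => ∑ j, z j = ψ),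
        sgn (∑ j, z j)) / (2 : ℝ) ^ (q - 1) = sgn ψ :=
  stmt16_general M q hq c₀ c K hK x hx h hh ψ hψ sgn hsgn
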